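/- arXiv:2202.04616 — 2 statements merged into one kernel-verified Lean document; each statement's English description precedes it below -/
import Mathlib

section
/- Let 0 < a < b and let f be a twice continuously differentiable, strictly positive function on [a,b]. Define L(y) = (∫_a^y x f(x) dx)/(∫_a^y f(x) dx) for y ∈ (a,b]. Then there exists y* ∈ (a,b] such that the function y ↦ L(y)/y is (weakly) decreasing on (a, y*]. -/
/-!
Write `F y = ∫ₐʸ f` and `M y = ∫ₐʸ x f x`. The derivative of `M / (y F)` has the sign of
`y f(y) (y F - M) - M F`. Near `a`, with `f ≈ f(a)`, the first term is about
`y f(a)² (y - a)² / 2`, because `y F - M = ∫ₐʸ (y - x) f x`, while `M F` is about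
`a f(a)² (y - a)²`. Since `y / 2 < a` for `y` close to `a > 0`, the numerator is nonpositive.
-/

open MeasureTheory Set Filter Topology

noncomputable def truncMean (f : ℝ → ℝ) (a y : ℝ) : ℝ :=
  (∫ x in a..y, x * f x) / ∫ x in a..y, f x

section

variable {f g : ℝ → ℝ} {a b c m K y y₀ : ℝ}

lemma mul_sub_le_intervalIntegral (hg : IntervalIntegrable g volume a y) (hay : a ≤ y)
    (hc : ∀ x ∈ Icc a y, c ≤ g x) : c * (y - a) ≤ ∫ x in a..y, g x := by
  have := intervalIntegral.integral_mono_on hay intervalIntegrable_const hg hc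
  rwa [intervalIntegral.integral_const, smul_eq_mul, mul_comm] at this

lemma mul_integral_sub_integral_mul_le (hf : ContinuousOn f (Icc a y)) (hay : a ≤ y)
    (hK : ∀ x ∈ Icc a y, f x ≤ K) :
    y * (∫ x in a..y, f x) - (∫ x in a..y, x * f x) ≤ K * ((y - a) ^ 2 / 2) := by
  have hf' : ContinuousOn f (uIcc a y) := by rwa [uIcc_of_le hay]
  have hF : IntervalIntegrable f volume a y := hf'.intervalIntegrable
  have hM : IntervalIntegrable (fun x => x * f x) volume a y :=
    (continuousOn_id.mul hf').intervalIntegrable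
  calc y * (∫ x in a..y, f x) - (∫ x in a..y, x * f x)
      = ∫ x in a..y, (y - x) * f x := by
        rw [← intervalIntegral.integral_const_mul, ← intervalIntegral.integral_sub (hF.const_mul y) hM]
        simp only [sub_mul]
    _ ≤ ∫ x in a..y, K * (y - x) := by
        refine intervalIntegral.integral_mono_on hay
          (((continuousOn_const.sub continuousOn_id).mul hf').intervalIntegrable)
          ((by fun_prop : Continuous fun x => K * (y - x)).intervalIntegrable a y) fun x hx => ?_
        rw [mul_comm K]
        exact mul_le_mul_of_nonneg_left (hK x hx) (by linarith [hx.2])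
    _ = K * ((y - a) ^ 2 / 2) := by
        simp [intervalIntegral.integral_comp_sub_left (fun x => x)]

lemma hasDerivAt_truncMean_div (hf : ContinuousOn f (Icc a b)) (hy : y ∈ Ioo a b)
    (hF : (∫ x in a..y, f x) ≠ 0) (hy₀ : y ≠ 0) :
    HasDerivAt (fun u => truncMean f a u / u)
      ((y * f y * (y * (∫ x in a..y, f x) - ∫ x in a..y, x * f x)
          - (∫ x in a..y, x * f x) * ∫ x in a..y, f x) / (y * ∫ x in a..y, f x) ^ 2) y := by
  have hfo : ContinuousOn f (Ioo a b) := hf.mono Ioo_subset_Icc_self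
  have hay : ContinuousOn f (uIcc a y) :=
    hf.mono (by rw [uIcc_of_le hy.1.le]; exact Icc_subset_Icc_right hy.2.le)
  have hF' : HasDerivAt (fun u => ∫ x in a..u, f x) (f y) y :=
    intervalIntegral.integral_hasDerivAt_right hay.intervalIntegrable
      (hfo.stronglyMeasurableAtFilter isOpen_Ioo y hy) (hfo.continuousAt (isOpen_Ioo.mem_nhds hy))
  have hM' : HasDerivAt (fun u => ∫ x in a..u, x * f x) (y * f y) y :=
    intervalIntegral.integral_hasDerivAt_right (continuousOn_id.mul hay).intervalIntegrable
      ((continuousOn_id.mul hfo).stronglyMeasurableAtFilter isOpen_Ioo y hy)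
      ((continuousOn_id.mul hfo).continuousAt (isOpen_Ioo.mem_nhds hy))
  refine ((hM'.div hF' hF).div (hasDerivAt_id y) hy₀).congr_deriv ?_
  simp only [id_eq, Pi.div_apply]
  field_simp

lemma truncMean_deriv_numerator_nonpos (hf : ContinuousOn f (Icc a y)) (ha : 0 ≤ a)
    (hay : a ≤ y) (hm : 0 ≤ m) (hfmK : MapsTo f (Icc a y) (Icc m K))
    (hK : y * K ^ 2 ≤ 2 * a * m ^ 2) :
    y * f y * (y * (∫ x in a..y, f x) - ∫ x in a..y, x * f x)
      - (∫ x in a..y, x * f x) * ∫ x in a..y, f x ≤ 0 := by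
  have hf' : ContinuousOn f (uIcc a y) := by rwa [uIcc_of_le hay]
  have hfy := hfmK ⟨hay, le_rfl⟩
  have hF : m * (y - a) ≤ ∫ x in a..y, f x :=
    mul_sub_le_intervalIntegral hf'.intervalIntegrable hay fun x hx => (hfmK hx).1
  have hM : a * m * (y - a) ≤ ∫ x in a..y, x * f x :=
    mul_sub_le_intervalIntegral (continuousOn_id.mul hf').intervalIntegrable hay fun x hx =>
      mul_le_mul hx.1 (hfmK hx).1 hm (by linarith [hx.1])
  have hR := mul_integral_sub_integral_mul_le hf hay fun x hx => (hfmK hx).2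
  have hK₀ : 0 ≤ K := hm.trans (hfy.1.trans hfy.2)
  rw [sub_nonpos]
  calc y * f y * (y * (∫ x in a..y, f x) - ∫ x in a..y, x * f x)
      ≤ y * K * (K * ((y - a) ^ 2 / 2)) := by
        refine (mul_le_mul_of_nonneg_left hR (by nlinarith [hfy.1])).trans ?_
        exact mul_le_mul_of_nonneg_right (by nlinarith [hfy.2]) (by positivity)
    _ = y * K ^ 2 * (y - a) ^ 2 / 2 := by ring
    _ ≤ a * m * (y - a) * (m * (y - a)) := by nlinarith [sq_nonneg (y - a)]
    _ ≤ (∫ x in a..y, x * f x) * ∫ x in a..y, f x :=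
        mul_le_mul hM hF (by positivity) ((by positivity : 0 ≤ a * m * (y - a)).trans hM)

lemma antitoneOn_truncMean_div (hf : ContinuousOn f (Icc a b)) (ha : 0 < a) (hm : 0 < m)
    (hy₀b : y₀ < b) (hfmK : MapsTo f (Icc a y₀) (Icc m K)) (hK : y₀ * K ^ 2 ≤ 2 * a * m ^ 2) :
    AntitoneOn (fun y => truncMean f a y / y) (Ioc a y₀) := by
  set D := fun y => (y * f y * (y * (∫ x in a..y, f x) - ∫ x in a..y, x * f x)
      - (∫ x in a..y, x * f x) * ∫ x in a..y, f x) / (y * ∫ x in a..y, f x) ^ 2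
  have hD : ∀ y ∈ Ioc a y₀, HasDerivAt (fun u => truncMean f a u / u) (D y) y ∧ D y ≤ 0 := by
    intro y hy
    have hfy : ContinuousOn f (Icc a y) := hf.mono (Icc_subset_Icc_right (hy.2.trans hy₀b.le))
    have hfmK' : MapsTo f (Icc a y) (Icc m K) := hfmK.mono_left (Icc_subset_Icc_right hy.2)
    have hF : 0 < ∫ x in a..y, f x :=
      (by nlinarith [hy.1] : 0 < m * (y - a)).trans_le <| mul_sub_le_intervalIntegral
        (hfy.intervalIntegrable_of_Icc hy.1.le) hy.1.le fun x hx => (hfmK' hx).1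
    refine ⟨hasDerivAt_truncMean_div hf ⟨hy.1, hy.2.trans_lt hy₀b⟩ hF.ne' (by linarith [hy.1]),
      div_nonpos_of_nonpos_of_nonneg ?_ (sq_nonneg _)⟩
    refine truncMean_deriv_numerator_nonpos hfy ha.le hy.1.le hm.le hfmK' ?_
    nlinarith [hy.2, sq_nonneg K]
  refine antitoneOn_of_hasDerivWithinAt_nonpos (f' := D) (convex_Ioc a y₀)
    (fun y hy => (hD y hy).1.continuousAt.continuousWithinAt) ?_ ?_
  all_goals rw [interior_Ioc]
  · exact fun y hy => (hD y (Ioo_subset_Ioc_self hy)).1.hasDerivWithinAt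
  · exact fun y hy => (hD y (Ioo_subset_Ioc_self hy)).2

lemma exists_mapsTo_Icc_of_continuousWithinAt {s : Set ℝ} {u : ℝ}
    (hf : ContinuousWithinAt f (Ici a) a) (hs : s ∈ 𝓝 (f a)) (hu : a < u) :
    ∃ y ∈ Ioo a u, MapsTo f (Icc a y) s := by
  have hev : {x | x < u ∧ f x ∈ s} ∈ 𝓝[≥] a :=
    inter_mem (nhdsWithin_le_nhds (Iio_mem_nhds hu)) (hf hs)
  obtain ⟨v, hav : a < v, hv⟩ := mem_nhdsGE_iff_exists_Ico_subset.1 hev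
  have hmid : (a + v) / 2 ∈ Ico a v := ⟨by linarith, by linarith⟩
  refine ⟨(a + v) / 2, ⟨by linarith, (hv hmid).1⟩, fun x hx => (hv ?_).2⟩
  exact ⟨hx.1, hx.2.trans_lt hmid.2⟩

end

/-- Pressed-ratio monotonicity near the lower endpoint: for a twice continuously
differentiable, strictly positive density on `[a,b]` with `0 < a < b`, there is
`y* ∈ (a,b]` such that `y ↦ L(y)/y` is weakly decreasing on `(a, y*]`. -/
theorem stmt4 (a b : ℝ) (ha : 0 < a) (hab : a < b) (f : ℝ → ℝ)
    (hf : ContDiffOn ℝ 2 f (Icc a b)) (hf_pos : ∀ x ∈ Icc a b, 0 < f x) :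
    ∃ ystar ∈ Ioc a b,
      AntitoneOn (fun y => ((∫ x in a..y, x * f x) / (∫ x in a..y, f x)) / y)
        (Ioc a ystar) := by
  have hc : 0 < f a := hf_pos a ⟨le_rfl, hab.le⟩
  have hfa : ContinuousWithinAt f (Ici a) a :=
    (hf.continuousOn.continuousWithinAt ⟨le_rfl, hab.le⟩).mono_of_mem_nhdsWithin
      (Icc_mem_nhdsGE hab)
  -- The constants work because `5/4 · (11/10)² ≤ 2 · (9/10)²`.
  obtain ⟨y₀, hy₀, hfy₀⟩ := exists_mapsTo_Icc_of_continuousWithinAt hfa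
    (Icc_mem_nhds (by linarith : 9 / 10 * f a < f a) (by linarith : f a < 11 / 10 * f a))
    (lt_min hab (by linarith : a < 5 / 4 * a))
  have hy₀b : y₀ < b := hy₀.2.trans_le (min_le_left _ _)
  have hy₀a : y₀ ≤ 5 / 4 * a := hy₀.2.le.trans (min_le_right _ _)
  refine ⟨y₀, ⟨hy₀.1, hy₀b.le⟩, antitoneOn_truncMean_div hf.continuousOn ha (by positivity)
    hy₀b hfy₀ ?_⟩
  nlinarith [mul_pos hc hc]
end

section
/- Let a < b with a ≥ 0, and let f be a continuous function on [a,b] with f(a) > 0. Then lim_{y → a⁺} [ f(y) · ∫_a^y (y − x) f(x) dx ] / ( ∫_a^y f(x) dx )² = 1/2. -/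
/-!
Write `F y = ∫_a^y f` and `N y = ∫_a^y (y - x) f x`. By the fundamental theorem of calculus
`F y / (y - a) → f a`, and since `N' = F`, L'Hôpital's rule gives `N y / (y - a)² → f a / 2`.
Hence `f y · N y / F y² = f y · (N y / (y - a)²) / (F y / (y - a))² → f a · (f a / 2) / (f a)² = 1/2`.
-/

open MeasureTheory Set Filter Topology

section

variable {f : ℝ → ℝ} {a b : ℝ}

theorem ContinuousOn.intervalIntegrable_of_mem_Icc (hf : ContinuousOn f (Icc a b)) {y : ℝ}
    (hy : y ∈ Icc a b) : IntervalIntegrable f volume a y :=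
  (hf.mono (Icc_subset_Icc_right hy.2)).intervalIntegrable_of_Icc hy.1

theorem integral_sub_mul_eq {y : ℝ} (hf : IntervalIntegrable f volume a y) :
    ∫ x in a..y, (y - x) * f x = y * (∫ x in a..y, f x) - ∫ x in a..y, x * f x := by
  simp_rw [sub_mul]
  rw [intervalIntegral.integral_sub (hf.const_mul y)
      (hf.continuousOn_mul (continuousOn_id' _)), intervalIntegral.integral_const_mul]

theorem hasDerivAt_integral_of_mem_Ioo (hf : ContinuousOn f (Icc a b)) {y : ℝ}
    (hy : y ∈ Ioo a b) : HasDerivAt (fun u => ∫ x in a..u, f x) (f y) y := by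
  have hmem : Icc a b ∈ 𝓝 y := Icc_mem_nhds hy.1 hy.2
  exact intervalIntegral.integral_hasDerivAt_right
    (hf.intervalIntegrable_of_mem_Icc (Ioo_subset_Icc_self hy))
    ⟨Icc a b, hmem, hf.aestronglyMeasurable measurableSet_Icc⟩ (hf.continuousAt hmem)

theorem hasDerivAt_integral_sub_mul_of_mem_Ioo (hf : ContinuousOn f (Icc a b)) {y : ℝ}
    (hy : y ∈ Ioo a b) :
    HasDerivAt (fun u => ∫ x in a..u, (u - x) * f x) (∫ x in a..y, f x) y := by
  have hxf : ContinuousOn (fun x => x * f x) (Icc a b) := continuousOn_id.mul hf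
  have hdiff := ((hasDerivAt_id y).mul (hasDerivAt_integral_of_mem_Ioo hf hy)).sub
    (hasDerivAt_integral_of_mem_Ioo hxf hy)
  refine (hdiff.congr_deriv (by simp)).congr_of_eventuallyEq ?_
  filter_upwards [Ioo_mem_nhds hy.1 hy.2] with u hu
  exact integral_sub_mul_eq (hf.intervalIntegrable_of_mem_Icc (Ioo_subset_Icc_self hu))

theorem tendsto_integral_nhdsGT (hab : a < b) (hf : ContinuousOn f (Icc a b)) :
    Tendsto (fun y => ∫ x in a..y, f x) (𝓝[>] a) (𝓝 0) := by
  have hcont := intervalIntegral.continuousOn_primitive_interval (μ := volume)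
    (hf.integrableOn_Icc.mono_set (uIcc_of_le hab.le).subset)
  have hcw := (hcont a left_mem_uIcc).mono_of_mem_nhdsWithin
    (uIcc_of_le hab.le ▸ Icc_mem_nhdsGT_of_mem ⟨le_rfl, hab⟩)
  simpa using hcw.tendsto

theorem tendsto_integral_div_sub_nhdsGT (hab : a < b) (hf : ContinuousOn f (Icc a b)) :
    Tendsto (fun y => (∫ x in a..y, f x) / (y - a)) (𝓝[>] a) (𝓝 (f a)) := by
  have hIcc : Icc a b ∈ 𝓝[>] a := Icc_mem_nhdsGT_of_mem ⟨le_rfl, hab⟩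
  have hD : HasDerivWithinAt (fun u => ∫ x in a..u, f x) (f a) (Ici a) a :=
    intervalIntegral.integral_hasDerivWithinAt_right (IntervalIntegrable.refl ..)
      ⟨Icc a b, hIcc, hf.aestronglyMeasurable measurableSet_Icc⟩
      ((hf.continuousWithinAt (left_mem_Icc.2 hab.le)).mono_of_mem_nhdsWithin hIcc)
  rw [hasDerivWithinAt_iff_tendsto_slope, Ici_sdiff_left] at hD
  exact hD.congr fun y => by simp [slope_def_field]

theorem tendsto_integral_sub_mul_div_sq_nhdsGT (hab : a < b) (hf : ContinuousOn f (Icc a b)) :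
    Tendsto (fun y => (∫ x in a..y, (y - x) * f x) / (y - a) ^ 2) (𝓝[>] a)
      (𝓝 (f a / 2)) := by
  have hsub : Tendsto (fun y : ℝ => y - a) (𝓝[>] a) (𝓝 0) :=
    tendsto_sub_nhds_zero_iff.2 nhdsWithin_le_nhds
  have hN : Tendsto (fun y => ∫ x in a..y, (y - x) * f x) (𝓝[>] a) (𝓝 0) := by
    have hlim := ((tendsto_nhdsWithin_of_tendsto_nhds tendsto_id).mul
      (tendsto_integral_nhdsGT hab hf)).sub (tendsto_integral_nhdsGT hab (continuousOn_id.mul hf))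
    rw [mul_zero, sub_zero] at hlim
    refine hlim.congr' ?_
    filter_upwards [Ioo_mem_nhdsGT hab] with y hy
    exact (integral_sub_mul_eq (hf.intervalIntegrable_of_mem_Icc (Ioo_subset_Icc_self hy))).symm
  refine HasDerivAt.lhopital_zero_right_on_Ioo (g' := fun y => 2 * (y - a)) hab
    (fun y hy => hasDerivAt_integral_sub_mul_of_mem_Ioo hf hy)
    (fun y _ => (((hasDerivAt_id y).sub_const a).pow 2).congr_deriv (by simp))
    (fun y hy => mul_ne_zero two_ne_zero (sub_pos.2 hy.1).ne')
    hN (by simpa using hsub.pow 2) ?_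
  refine ((tendsto_integral_div_sub_nhdsGT hab hf).div_const 2).congr fun y => ?_
  rw [div_div, mul_comm]

end

theorem stmt5_general (a b : ℝ) (hab : a < b) (f : ℝ → ℝ)
    (hf : ContinuousOn f (Icc a b)) (hfa : 0 < f a) :
    Filter.Tendsto
      (fun y => (f y * ∫ x in a..y, (y - x) * f x) / (∫ x in a..y, f x) ^ 2)
      (nhdsWithin a (Ioi a)) (nhds (1 / 2)) := by
  have hf_right : Tendsto f (𝓝[>] a) (𝓝 (f a)) :=
    (hf.continuousWithinAt (left_mem_Icc.2 hab.le)).mono_of_mem_nhdsWithin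
      (Icc_mem_nhdsGT_of_mem ⟨le_rfl, hab⟩)
  have hlim := (hf_right.mul (tendsto_integral_sub_mul_div_sq_nhdsGT hab hf)).div
    ((tendsto_integral_div_sub_nhdsGT hab hf).pow 2) (pow_ne_zero 2 hfa.ne')
  rw [show f a * (f a / 2) / f a ^ 2 = 1 / 2 by field_simp] at hlim
  refine hlim.congr' ?_
  filter_upwards [self_mem_nhdsWithin] with y hy
  have hya : (y - a) ^ 2 ≠ 0 := pow_ne_zero 2 (sub_ne_zero.2 (ne_of_gt hy))
  rw [Pi.div_apply, div_pow, mul_div_assoc, mul_div_assoc, div_div_div_cancel_right₀ hya]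

/-- The key L'Hôpital limit: `lim_{y→a⁺} f(y)·∫_a^y (y−x)f(x) dx / (∫_a^y f(x) dx)² = 1/2`. -/
theorem stmt5 (a b : ℝ) (hab : a < b) (ha : 0 ≤ a) (f : ℝ → ℝ)
    (hf : ContinuousOn f (Icc a b)) (hfa : 0 < f a) :
    Filter.Tendsto
      (fun y => (f y * ∫ x in a..y, (y - x) * f x) / (∫ x in a..y, f x) ^ 2)
      (nhdsWithin a (Ioi a)) (nhds (1 / 2)) :=
  stmt5_general a b hab f hf hfa
end
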